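/- arXiv:0911.0736 — 2 statements merged into one kernel-verified Lean document; each statement's English description precedes it below -/
import Mathlib

section
/- Suppose for all vectors s in a finite set S ⊂ R^n with ||s||_2 ≤ 1 we have ||As||_2^2 ≤ (1+2η)||s||_2^2, where S is an ε-net of the unit ball of a union of (K)-dimensional coordinate subspaces Σ_K (i.e., every x ∈ Σ_K with ||x||_2 ≤ 1 has some s ∈ S in the same subspace with ||x−s||_2 ≤ ε). Define B as the smallest constant with ||Ax||_2^2 ≤ B ||x||_2^2 for all x ∈ Σ_K, ||x||_2 ≤ 1. Then √B ≤ √(1+2η)/(1−ε). -/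
/-!
Normalise a sparse `x` to the unit sphere and pick a net point `s` with `x - s` sparse and
`‖x - s‖ ≤ ε`. Then `‖A x‖ ≤ ‖A s‖ + ‖A (x - s)‖ ≤ √(1 + 2η) + ε √B`, so by minimality
`√B ≤ √(1 + 2η) + ε √B`, which rearranges to the claim since `ε < 1`.
-/

/-- Squared Euclidean norm of a vector. -/
def sqnorm {n : Type*} [Fintype n] (x : n → ℝ) : ℝ := ∑ i, x i ^ 2

/-- `x` has at most `K` nonzero entries. -/
def sparse {n : Type*} (K : ℕ) (x : n → ℝ) : Prop := (Function.support x).ncard ≤ K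

section NetArgument

variable {E F : Type*} [NormedAddCommGroup E] [NormedSpace ℝ E]
  [SeminormedAddCommGroup F] [NormedSpace ℝ F] (f : E →ₗ[ℝ] F) {T S : Set E} {t ε b : ℝ}

theorem norm_map_le_of_net_of_norm_le_one (hS : ∀ s ∈ S, ‖f s‖ ≤ t)
    (hnet : ∀ x ∈ T, ‖x‖ ≤ 1 → ∃ s ∈ S, x - s ∈ T ∧ ‖x - s‖ ≤ ε) (hε : ε ≤ 1)
    (hb : ∀ z ∈ T, ‖z‖ ≤ 1 → ‖f z‖ ≤ b * ‖z‖) (hb0 : 0 ≤ b)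
    {x : E} (hx : x ∈ T) (hx1 : ‖x‖ ≤ 1) : ‖f x‖ ≤ t + ε * b := by
  obtain ⟨s, hs, hxs, hxsε⟩ := hnet x hx hx1
  calc ‖f x‖ = ‖f s + f (x - s)‖ := by rw [← map_add, add_sub_cancel]
    _ ≤ ‖f s‖ + ‖f (x - s)‖ := norm_add_le _ _
    _ ≤ t + b * ‖x - s‖ := add_le_add (hS s hs) (hb _ hxs (hxsε.trans hε))
    _ ≤ t + ε * b := by rw [mul_comm ε]; gcongr

theorem norm_map_le_of_net (hT : ∀ (c : ℝ), ∀ x ∈ T, c • x ∈ T) (hS : ∀ s ∈ S, ‖f s‖ ≤ t)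
    (hnet : ∀ x ∈ T, ‖x‖ ≤ 1 → ∃ s ∈ S, x - s ∈ T ∧ ‖x - s‖ ≤ ε) (hε : ε ≤ 1)
    (hb : ∀ z ∈ T, ‖z‖ ≤ 1 → ‖f z‖ ≤ b * ‖z‖) (hb0 : 0 ≤ b)
    {x : E} (hx : x ∈ T) : ‖f x‖ ≤ (t + ε * b) * ‖x‖ := by
  rcases eq_or_ne x 0 with rfl | hx0
  · simp
  have hunit := norm_map_le_of_net_of_norm_le_one f hS hnet hε hb hb0 (hT ‖x‖⁻¹ x hx)
    (norm_smul_inv_norm hx0).le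
  calc ‖f x‖ = ‖x‖ * ‖f (‖x‖⁻¹ • x)‖ := by
        rw [map_smul, norm_smul, norm_inv, norm_norm, mul_inv_cancel_left₀ (norm_ne_zero_iff.2 hx0)]
    _ ≤ ‖x‖ * (t + ε * b) := mul_le_mul_of_nonneg_left hunit (norm_nonneg x)
    _ = (t + ε * b) * ‖x‖ := mul_comm _ _

end NetArgument

section Euclidean

variable {n : Type*}

theorem sparse_smul [Finite n] {K : ℕ} {x : n → ℝ} (hx : sparse K x) (c : ℝ) :
    sparse K (c • x) :=
  (Set.ncard_le_ncard (Function.support_const_smul_subset c x)).trans hx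

variable [Fintype n] {m : Type*} [Fintype m]

theorem sqnorm_ofLp (x : EuclideanSpace ℝ n) : sqnorm x.ofLp = ‖x‖ ^ 2 :=
  (EuclideanSpace.real_norm_sq_eq x).symm

theorem sqrt_sqnorm_ofLp (x : EuclideanSpace ℝ n) : √(sqnorm x.ofLp) = ‖x‖ := by
  rw [sqnorm_ofLp, Real.sqrt_sq (norm_nonneg _)]

theorem sqnorm_ofLp_le_one_iff {x : EuclideanSpace ℝ n} : sqnorm x.ofLp ≤ 1 ↔ ‖x‖ ≤ 1 := by
  rw [sqnorm_ofLp, sq_le_one_iff₀ (norm_nonneg _)]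

theorem norm_le_sqrt_mul_of_sqnorm_le {x : EuclideanSpace ℝ n} {y : EuclideanSpace ℝ m} {c : ℝ}
    (h : sqnorm y.ofLp ≤ c * sqnorm x.ofLp) : ‖y‖ ≤ √c * ‖x‖ := by
  rw [← sqrt_sqnorm_ofLp, ← sqrt_sqnorm_ofLp, ← Real.sqrt_mul' _ (by rw [sqnorm_ofLp]; positivity)]
  exact Real.sqrt_le_sqrt h

theorem sqnorm_le_sq_mul_of_norm_le {x : EuclideanSpace ℝ n} {y : EuclideanSpace ℝ m} {c : ℝ}
    (h : ‖y‖ ≤ c * ‖x‖) : sqnorm y.ofLp ≤ c ^ 2 * sqnorm x.ofLp := by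
  rw [sqnorm_ofLp, sqnorm_ofLp, ← mul_pow]
  exact pow_le_pow_left₀ (norm_nonneg _) h 2

end Euclidean

theorem net_argument_general {m n K : ℕ} (A : Matrix (Fin m) (Fin n) ℝ) (η ε B : ℝ)
    (hε : ε ∈ Set.Ico (0 : ℝ) 1)
    (S : Finset (Fin n → ℝ))
    (hSball : ∀ s ∈ S, sqnorm s ≤ 1)
    (hSbound : ∀ s ∈ S, sqnorm (A.mulVec s) ≤ (1 + 2 * η) * sqnorm s)
    (hnet : ∀ x : Fin n → ℝ, sparse K x → sqnorm x ≤ 1 →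
      ∃ s ∈ S, sparse K (x - s) ∧ Real.sqrt (sqnorm (x - s)) ≤ ε)
    (hB : IsLeast {B' : ℝ | 0 ≤ B' ∧ ∀ x : Fin n → ℝ, sparse K x → sqnorm x ≤ 1 →
      sqnorm (A.mulVec x) ≤ B' * sqnorm x} B) :
    Real.sqrt B ≤ Real.sqrt (1 + 2 * η) / (1 - ε) := by
  obtain ⟨hε0, hε1⟩ := hε
  obtain ⟨⟨-, hBbound⟩, hBleast⟩ := hB
  let f := Matrix.toEuclideanLin A
  let T := {x : EuclideanSpace ℝ (Fin n) | sparse K x.ofLp}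
  let S' := {s : EuclideanSpace ℝ (Fin n) | s.ofLp ∈ S}
  have hS : ∀ s ∈ S', ‖f s‖ ≤ √(1 + 2 * η) := by
    intro s hs
    calc ‖f s‖ ≤ √(1 + 2 * η) * ‖s‖ :=
          norm_le_sqrt_mul_of_sqnorm_le (y := f s) (hSbound s.ofLp hs)
      _ ≤ √(1 + 2 * η) := mul_le_of_le_one_right (Real.sqrt_nonneg _)
          (sqnorm_ofLp_le_one_iff.1 (hSball _ hs))
  have hnet' : ∀ x ∈ T, ‖x‖ ≤ 1 → ∃ s ∈ S', x - s ∈ T ∧ ‖x - s‖ ≤ ε := by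
    intro x hx hx1
    obtain ⟨s, hs, hxs, hxsε⟩ := hnet x.ofLp hx (sqnorm_ofLp_le_one_iff.2 hx1)
    exact ⟨WithLp.toLp 2 s, hs, hxs, (sqrt_sqnorm_ofLp (x - WithLp.toLp 2 s)).symm.trans_le hxsε⟩
  have hb : ∀ z ∈ T, ‖z‖ ≤ 1 → ‖f z‖ ≤ √B * ‖z‖ := fun z hz hz1 =>
    norm_le_sqrt_mul_of_sqnorm_le (y := f z) (hBbound z.ofLp hz (sqnorm_ofLp_le_one_iff.2 hz1))
  have hBle : B ≤ (√(1 + 2 * η) + ε * √B) ^ 2 := hBleast ⟨sq_nonneg _, fun x hx _ =>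
    sqnorm_le_sq_mul_of_norm_le (y := f (WithLp.toLp 2 x)) (norm_map_le_of_net f (T := T)
      (fun c x hx => sparse_smul hx c) hS hnet' hε1.le hb (Real.sqrt_nonneg B) hx)⟩
  have hsqrtB : √B ≤ √(1 + 2 * η) + ε * √B :=
    (Real.sqrt_le_sqrt hBle).trans_eq (Real.sqrt_sq (by positivity))
  rw [le_div_iff₀ (sub_pos.2 hε1)]
  linarith

/-- The ε-net argument: if `‖As‖² ≤ (1+2η)‖s‖²` on an ε-net `S` of the unit ball of
the union of `K`-dimensional coordinate subspaces (chosen so that `x - s` remains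
`K`-sparse), and `B` is the smallest constant with `‖Ax‖² ≤ B‖x‖²` on that set,
then `√B ≤ √(1+2η)/(1-ε)`. -/
theorem net_argument {m n K : ℕ} (A : Matrix (Fin m) (Fin n) ℝ) (η ε B : ℝ)
    (hη : 0 ≤ η) (hε : ε ∈ Set.Ico (0 : ℝ) 1)
    (S : Finset (Fin n → ℝ))
    (hSball : ∀ s ∈ S, sqnorm s ≤ 1)
    (hSbound : ∀ s ∈ S, sqnorm (A.mulVec s) ≤ (1 + 2 * η) * sqnorm s)
    (hnet : ∀ x : Fin n → ℝ, sparse K x → sqnorm x ≤ 1 →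
      ∃ s ∈ S, sparse K (x - s) ∧ Real.sqrt (sqnorm (x - s)) ≤ ε)
    (hB : IsLeast {B' : ℝ | 0 ≤ B' ∧ ∀ x : Fin n → ℝ, sparse K x → sqnorm x ≤ 1 →
      sqnorm (A.mulVec x) ≤ B' * sqnorm x} B) :
    Real.sqrt B ≤ Real.sqrt (1 + 2 * η) / (1 - ε) :=
  net_argument_general A η ε B hε S hSball hSbound hnet hB
end

section
/- Let A = [I Φ] be an M×(N+M) matrix satisfying the RIP of order K+D with constant δ ∈ (0, 1/2). Then for every Γ ⊂ {1,…,M} with |Γ| ≥ M−D, the row-submatrix Φ^Γ satisfies the RIP of order K with constant δ/(1−δ). In other words, A having the RIP of order K+D implies Φ is (M−D, K, δ/(1−δ))-democratic. -/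
/-- A matrix `A` satisfies the restricted isometry property (RIP) of order `K`
with constant `δ` if `(1-δ)‖x‖² ≤ ‖Ax‖² ≤ (1+δ)‖x‖²` for all `K`-sparse `x`. -/
def RIP {m n : Type*} [Fintype m] [Fintype n] (A : Matrix m n ℝ) (K : ℕ) (δ : ℝ) : Prop :=
  ∀ x : n → ℝ, (Function.support x).ncard ≤ K →
    (1 - δ) * sqnorm x ≤ sqnorm (A.mulVec x) ∧ sqnorm (A.mulVec x) ≤ (1 + δ) * sqnorm x

/-!
Let `y = Φ x` for a `K`-sparse `x`. The identity block of `A = [I Φ]` can cancel the at most `D`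
coordinates of `y` outside `Γ`: the `(K + D)`-sparse vector `(-y · 1_{Γᶜ}, x)` is mapped by `A`
to `y · 1_Γ`, whose norm is `‖Φ^Γ x‖` (this is `P_Λ^⊥ A = I(Γ) A` with `Λ = Γᶜ`). The lower RIP
bound of `A` thus gives `(1 - δ)‖x‖² ≤ ‖Φ^Γ x‖²`, while `(0, x)` gives
`‖Φ^Γ x‖² ≤ ‖Φ x‖² ≤ (1 + δ)‖x‖²`. So `Φ^Γ` has RIP constant `δ`, and a fortiori `δ / (1 - δ)`.
-/

open Matrix

lemma sqnorm_restrict {m : Type*} (s : Finset m) (y : m → ℝ) :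
    sqnorm (fun i : s => y i) = ∑ i ∈ s, y i ^ 2 :=
  Finset.sum_coe_sort s fun i => y i ^ 2

section

variable {m n : Type*} [Fintype m] [Fintype n]

lemma sqnorm_nonneg (x : n → ℝ) : 0 ≤ sqnorm x :=
  Finset.sum_nonneg fun _ _ => sq_nonneg _

lemma sqnorm_sumElim (u : m → ℝ) (x : n → ℝ) :
    sqnorm (Sum.elim u x) = sqnorm u + sqnorm x :=
  Fintype.sum_sum_type _

lemma sqnorm_indicator (s : Finset m) (y : m → ℝ) :
    sqnorm ((s : Set m).indicator y) = ∑ i ∈ s, y i ^ 2 := by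
  rw [sqnorm, ← Finset.sum_indicator_subset _ (Finset.subset_univ s)]
  refine Finset.sum_congr rfl fun i _ => ?_
  by_cases hi : i ∈ (s : Set m) <;> simp [hi]

lemma sum_sq_le_sqnorm (s : Finset m) (y : m → ℝ) : ∑ i ∈ s, y i ^ 2 ≤ sqnorm y :=
  Finset.sum_le_sum_of_subset_of_nonneg (Finset.subset_univ s) fun _ _ _ => sq_nonneg _

lemma ncard_support_sumElim_le (u : m → ℝ) (x : n → ℝ) :
    (Function.support (Sum.elim u x)).ncard ≤
      (Function.support u).ncard + (Function.support x).ncard := by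
  have hsub : Function.support (Sum.elim u x) ⊆
      Sum.inl '' Function.support u ∪ Sum.inr '' Function.support x := by
    rintro (a | b) hi
    · exact Or.inl ⟨a, hi, rfl⟩
    · exact Or.inr ⟨b, hi, rfl⟩
  calc (Function.support (Sum.elim u x)).ncard
      ≤ (Sum.inl '' Function.support u ∪ Sum.inr '' Function.support x).ncard :=
        Set.ncard_le_ncard hsub
    _ ≤ (Sum.inl '' Function.support u).ncard + (Sum.inr '' Function.support x).ncard :=
        Set.ncard_union_le _ _
    _ = (Function.support u).ncard + (Function.support x).ncard := by
        rw [Set.ncard_image_of_injective _ Sum.inl_injective,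
          Set.ncard_image_of_injective _ Sum.inr_injective]

lemma RIP.mono {A : Matrix m n ℝ} {K : ℕ} {δ δ' : ℝ} (hA : RIP A K δ) (hδ : δ ≤ δ') :
    RIP A K δ' := fun x hx =>
  have hx0 := sqnorm_nonneg x
  ⟨by nlinarith [(hA x hx).1], by nlinarith [(hA x hx).2]⟩

theorem RIP.submatrix_of_fromCols_one [DecidableEq m] {Φ : Matrix m n ℝ} {K D : ℕ} {δ : ℝ}
    (hA : RIP (fromCols (1 : Matrix m m ℝ) Φ) (K + D) δ) (Γ : Finset m) (hΓ : Γᶜ.card ≤ D) :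
    RIP (Φ.submatrix (Subtype.val : Γ → m) id) K δ := by
  intro x hx
  have hΦΓ : sqnorm (Φ.submatrix (Subtype.val : Γ → m) id *ᵥ x) = ∑ i ∈ Γ, (Φ *ᵥ x) i ^ 2 :=
    sqnorm_restrict Γ (Φ *ᵥ x)
  have hx0 := sqnorm_nonneg x
  rw [hΦΓ]
  constructor
  · set u := (↑Γ : Set m)ᶜ.indicator (-(Φ *ᵥ x)) with hu_def
    have hu : (Function.support u).ncard ≤ D := calc
      (Function.support u).ncard ≤ ((↑Γ : Set m)ᶜ).ncard :=
        Set.ncard_le_ncard Set.support_indicator_subset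
      _ = Γᶜ.card := by rw [← Finset.coe_compl, Set.ncard_coe_finset]
      _ ≤ D := hΓ
    have hAw : fromCols 1 Φ *ᵥ Sum.elim u x = (↑Γ : Set m).indicator (Φ *ᵥ x) := by
      rw [fromCols_mulVec_sumElim, one_mulVec, hu_def, Set.indicator_compl, Set.indicator_neg']
      abel
    have hlow := (hA (Sum.elim u x) <| by linarith [ncard_support_sumElim_le u x]).1
    rw [hAw, sqnorm_indicator, sqnorm_sumElim] at hlow
    rcases le_total δ 1 with hδ | hδ
    · nlinarith [sqnorm_nonneg u]
    · nlinarith [Finset.sum_nonneg fun i (_ : i ∈ Γ) => sq_nonneg ((Φ *ᵥ x) i)]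
  · have hsparse : (Function.support (Sum.elim (0 : m → ℝ) x)).ncard ≤ K + D := by
      have := ncard_support_sumElim_le (0 : m → ℝ) x
      rw [Function.support_zero, Set.ncard_empty] at this
      omega
    have hup := (hA (Sum.elim 0 x) hsparse).2
    rw [fromCols_mulVec_sumElim, mulVec_zero, zero_add, sqnorm_sumElim] at hup
    calc ∑ i ∈ Γ, (Φ *ᵥ x) i ^ 2 ≤ sqnorm (Φ *ᵥ x) := sum_sq_le_sqnorm Γ _
      _ ≤ (1 + δ) * (sqnorm (0 : m → ℝ) + sqnorm x) := hup
      _ = (1 + δ) * sqnorm x := by simp [sqnorm]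

end

/-- If `A = [I Φ]` satisfies the RIP of order `K + D` with constant `δ ∈ (0,1/2)`,
then `Φ` is `(M-D, K, δ/(1-δ))`-democratic: every row-submatrix `Φ^Γ` with
`|Γ| ≥ M - D` satisfies the RIP of order `K` with constant `δ/(1-δ)`. -/
theorem rip_implies_democratic {M N K D : ℕ} (Φ : Matrix (Fin M) (Fin N) ℝ) (δ : ℝ)
    (hδ : δ ∈ Set.Ioo (0 : ℝ) (1/2))
    (hA : RIP (Matrix.fromCols (1 : Matrix (Fin M) (Fin M) ℝ) Φ) (K + D) δ) :
    ∀ Γ : Finset (Fin M), M - D ≤ Γ.card →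
      RIP (Φ.submatrix (Subtype.val : {i // i ∈ Γ} → Fin M) id) K (δ / (1 - δ)) := by
  intro Γ hΓ
  have hδ1 : 0 < 1 - δ := by linarith [hδ.2]
  refine (hA.submatrix_of_fromCols_one Γ ?_).mono ?_
  · rw [Finset.card_compl, Fintype.card_fin]
    omega
  · rw [le_div_iff₀ hδ1]
    nlinarith [sq_nonneg δ]
end
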